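/- arXiv:0707.4231 — 4 statements merged into one kernel-verified Lean document; each statement's English description precedes it below -/
import Mathlib

section
/- Let (X, d) be a metric space and let (K⁽ⁿ⁾) be a sequence of finite subsets of X, each of cardinality at most k. Then there exists a subsequence and an integer l ≥ 1 such that each set K⁽ⁿ⁾ in the subsequence decomposes as a disjoint union of nonempty subsets K⁽ⁿ⁾ = K⁽ⁿ⁾₁ ∪ … ∪ K⁽ⁿ⁾ₗ with the properties: (1) there is a constant D < ∞ with diam(K⁽ⁿ⁾ᵢ) ≤ D for all i and n; (2) for i ≠ j, dist(K⁽ⁿ⁾ᵢ, K⁽ⁿ⁾ⱼ) → ∞ as n → ∞. -/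
/-!
Enumerate each `K n` by a map `Fin k → X`. A real sequence has a subsequence that is either
bounded or tends to `+∞`; extracting successively for each of the finitely many pairs of indices,
every pairwise distance becomes bounded or divergent along one common subsequence. Boundedness of
the distance is an equivalence relation on the indices (triangle inequality), and its classes give
the pieces: inside a class distances are uniformly bounded, across classes they diverge. Divergent
pairs are eventually at positive distance, so after dropping finitely many terms the pieces are
disjoint.
-/

open Filter Set Metric

def BddAboveOrTendstoAtTop (u : ℕ → ℝ) : Prop :=
  BddAbove (range u) ∨ Tendsto u atTop atTop

theorem BddAboveOrTendstoAtTop.comp {u : ℕ → ℝ} (hu : BddAboveOrTendstoAtTop u) {ψ : ℕ → ℕ}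
    (hψ : StrictMono ψ) : BddAboveOrTendstoAtTop (u ∘ ψ) :=
  hu.imp (fun h => h.mono (range_comp_subset_range ψ u)) fun h => h.comp hψ.tendsto_atTop

theorem exists_strictMono_bddAboveOrTendstoAtTop (u : ℕ → ℝ) :
    ∃ ψ : ℕ → ℕ, StrictMono ψ ∧ BddAboveOrTendstoAtTop (u ∘ ψ) := by
  by_cases h : ∃ C, ∃ᶠ n in atTop, u n ≤ C
  · obtain ⟨C, hC⟩ := h
    obtain ⟨ψ, hψ, hψC⟩ := extraction_of_frequently_atTop hC
    exact ⟨ψ, hψ, Or.inl ⟨C, forall_mem_range.2 hψC⟩⟩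
  · simp only [not_exists, not_frequently, not_le] at h
    exact ⟨id, strictMono_id, Or.inr <| tendsto_atTop.2 fun C => (h C).mono fun _ => le_of_lt⟩

theorem exists_strictMono_forall_bddAboveOrTendstoAtTop {ι : Type*} [Finite ι]
    (u : ι → ℕ → ℝ) : ∃ ψ : ℕ → ℕ, StrictMono ψ ∧ ∀ i, BddAboveOrTendstoAtTop (u i ∘ ψ) := by
  have := Fintype.ofFinite ι
  suffices ∀ s : Finset ι, ∃ ψ : ℕ → ℕ, StrictMono ψ ∧ ∀ i ∈ s, BddAboveOrTendstoAtTop (u i ∘ ψ)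
    by simpa using this Finset.univ
  intro s
  induction s using Finset.cons_induction with
  | empty => exact ⟨id, strictMono_id, by simp⟩
  | cons i s _ ih =>
    obtain ⟨ψ, hψ, hs⟩ := ih
    obtain ⟨ψ', hψ', hi⟩ := exists_strictMono_bddAboveOrTendstoAtTop (u i ∘ ψ)
    refine ⟨ψ ∘ ψ', hψ.comp hψ', ?_⟩
    simp only [Finset.mem_cons, forall_eq_or_imp]
    exact ⟨hi, fun j hj => (hs j hj).comp hψ'⟩

theorem Finset.Nonempty.exists_fin_range_eq {X : Type*} {s : Finset X} {k : ℕ} (hs : s.Nonempty)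
    (hk : s.card ≤ k) : ∃ f : Fin k → X, Set.range f = s := by
  have : Nonempty s := hs.to_subtype
  obtain ⟨g⟩ : Nonempty (s ↪ Fin k) := Function.Embedding.nonempty_of_card_le (by simpa using hk)
  refine ⟨Subtype.val ∘ Function.invFun g, ?_⟩
  rw [range_comp, (Function.invFun_surjective g.injective).range_eq, image_univ,
    Subtype.range_coe_subtype, Finset.setOfPred_mem]

section Pieces

variable {X ι : Type*} [PseudoMetricSpace X] (z : ℕ → ι → X)

def boundedDistSetoid : Setoid ι where
  r a b := BddAbove (range fun n => dist (z n a) (z n b))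
  iseqv :=
    { refl := fun a => ⟨0, forall_mem_range.2 fun n => (dist_self _).le⟩
      symm := fun {a b} h => by simpa only [dist_comm] using h
      trans := fun {a b c} ⟨C₁, h₁⟩ ⟨C₂, h₂⟩ => ⟨C₁ + C₂, forall_mem_range.2 fun n =>
        (dist_triangle _ (z n b) _).trans <|
          add_le_add (h₁ (mem_range_self n)) (h₂ (mem_range_self n))⟩ }

variable [Fintype ι]

open Classical in
noncomputable def piece (n : ℕ) (q : Quotient (boundedDistSetoid z)) : Finset X :=
  (Finset.univ.filter fun a => (⟦a⟧ : Quotient (boundedDistSetoid z)) = q).image (z n)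

theorem mem_piece {n : ℕ} {q : Quotient (boundedDistSetoid z)} {x : X} :
    x ∈ piece z n q ↔ ∃ a, ⟦a⟧ = q ∧ z n a = x := by
  simp [piece]

theorem piece_nonempty (n : ℕ) (q : Quotient (boundedDistSetoid z)) : (piece z n q).Nonempty :=
  q.inductionOn fun a => ⟨z n a, (mem_piece z).2 ⟨a, rfl, rfl⟩⟩

theorem iUnion_piece (n : ℕ) : ⋃ q, (piece z n q : Set X) = range (z n) := by
  ext x
  simp only [mem_iUnion, Finset.mem_coe, mem_piece, mem_range]
  exact ⟨fun ⟨_, a, _, hx⟩ => ⟨a, hx⟩, fun ⟨a, hx⟩ => ⟨_, a, rfl, hx⟩⟩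

theorem disjoint_piece {n : ℕ} (hn : ∀ a b, z n a = z n b → boundedDistSetoid z a b)
    {q q' : Quotient (boundedDistSetoid z)} (hqq' : q ≠ q') :
    Disjoint (piece z n q) (piece z n q') := by
  refine Finset.disjoint_left.2 fun x hx hx' => hqq' ?_
  obtain ⟨a, rfl, rfl⟩ := (mem_piece z).1 hx
  obtain ⟨b, rfl, hba⟩ := (mem_piece z).1 hx'
  exact Quotient.sound (hn a b hba.symm)

theorem exists_forall_diam_piece_le : ∃ D, ∀ n q, diam (piece z n q : Set X) ≤ D := by
  obtain ⟨D, hD⟩ := ((toFinite {p : ι × ι | boundedDistSetoid z p.1 p.2}).bddAbove_biUnion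
    (S := fun p => range fun n => dist (z n p.1) (z n p.2))).2 fun p (hp : boundedDistSetoid z p.1 p.2) => hp
  refine ⟨D, fun n q => diam_le_of_forall_dist_le_of_nonempty (piece_nonempty z n q) ?_⟩
  intro x hx y hy
  obtain ⟨a, rfl, rfl⟩ := (mem_piece z).1 hx
  obtain ⟨b, hba, rfl⟩ := (mem_piece z).1 hy
  exact hD (mem_iUnion₂.2 ⟨(a, b), Quotient.exact hba.symm, mem_range_self n⟩)

variable {z}
variable (hz : ∀ a b, BddAboveOrTendstoAtTop fun n => dist (z n a) (z n b))
include hz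

theorem eventually_boundedDistSetoid_of_eq :
    ∀ᶠ n in atTop, ∀ a b, z n a = z n b → boundedDistSetoid z a b := by
  simp only [eventually_all]
  intro a b
  by_cases hab : boundedDistSetoid z a b
  · exact Eventually.of_forall fun _ _ => hab
  · filter_upwards [((hz a b).resolve_left hab).eventually_gt_atTop 0]
      with n hn heq
    simp [heq] at hn

theorem eventually_le_dist_piece {q q' : Quotient (boundedDistSetoid z)} (hqq' : q ≠ q')
    (R : ℝ) : ∀ᶠ n in atTop, ∀ x ∈ piece z n q, ∀ y ∈ piece z n q', R ≤ dist x y := by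
  have : ∀ᶠ n in atTop, ∀ a b, (⟦a⟧ : Quotient (boundedDistSetoid z)) = q → ⟦b⟧ = q' →
      R ≤ dist (z n a) (z n b) := by
    simp only [eventually_all]
    intro a b ha hb
    have hab : ¬ boundedDistSetoid z a b := fun h =>
      hqq' (by rw [← ha, ← hb]; exact Quotient.sound h)
    exact ((hz a b).resolve_left hab).eventually_ge_atTop R
  filter_upwards [this] with n hn x hx y hy
  obtain ⟨a, ha, rfl⟩ := (mem_piece z).1 hx
  obtain ⟨b, hb, rfl⟩ := (mem_piece z).1 hy
  exact hn a b ha hb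

end Pieces

/-- Lemma 3.3 (break-up lemma): a sequence of finite subsets of uniformly bounded
cardinality in a metric space subconverges to a decomposition into pieces of uniformly
bounded diameter whose mutual distances diverge. -/
theorem finset_sequence_breakup
    {X : Type*} [MetricSpace X] (k : ℕ) (K : ℕ → Finset X)
    (hcard : ∀ n, (K n).card ≤ k) (hne : ∀ n, (K n).Nonempty) :
    ∃ (φ : ℕ → ℕ), StrictMono φ ∧
    ∃ (l : ℕ), 1 ≤ l ∧
    ∃ (P : ℕ → Fin l → Finset X),
      (∀ n i, (P n i).Nonempty) ∧
      (∀ n, ∀ i j : Fin l, i ≠ j → Disjoint (P n i) (P n j)) ∧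
      (∀ n, (↑(K (φ n)) : Set X) = ⋃ i, (↑(P n i) : Set X)) ∧
      (∃ D : ℝ, ∀ n, ∀ i : Fin l, Metric.diam (↑(P n i) : Set X) ≤ D) ∧
      (∀ i j : Fin l, i ≠ j → ∀ R : ℝ, ∃ N : ℕ, ∀ n ≥ N,
        ∀ x ∈ P n i, ∀ y ∈ P n j, R ≤ dist x y) := by
  choose f hf using fun n => (hne n).exists_fin_range_eq (hcard n)
  obtain ⟨ψ, hψ, hz⟩ := exists_strictMono_forall_bddAboveOrTendstoAtTop
    fun p : Fin k × Fin k => fun n => dist (f n p.1) (f n p.2)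
  set z : ℕ → Fin k → X := fun n => f (ψ n)
  replace hz : ∀ a b, BddAboveOrTendstoAtTop fun n => dist (z n a) (z n b) := fun a b => hz (a, b)
  obtain ⟨N, hN⟩ := eventually_atTop.1 (eventually_boundedDistSetoid_of_eq hz)
  have : Nonempty (Quotient (boundedDistSetoid z)) :=
    ⟨⟦⟨0, (hne 0).card_pos.trans_le (hcard 0)⟩⟧⟩
  let e := (Finite.equivFin (Quotient (boundedDistSetoid z))).symm
  refine ⟨fun n => ψ (n + N), hψ.comp (strictMono_id.add_const N), _, Nat.card_pos,
    fun n i => piece z (n + N) (e i), fun n i => piece_nonempty z _ _,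
    fun n i j hij => disjoint_piece z (hN _ (N.le_add_left n)) (e.injective.ne hij), ?_, ?_, ?_⟩
  · intro n
    rw [e.surjective.iUnion_comp (fun q => (piece z (n + N) q : Set X)), iUnion_piece, ← hf]
  · obtain ⟨D, hD⟩ := exists_forall_diam_piece_le z
    exact ⟨D, fun n i => hD _ _⟩
  · intro i j hij R
    exact eventually_atTop.1 <| (tendsto_add_atTop_nat N).eventually <|
      eventually_le_dist_piece hz (e.injective.ne hij) R
end

section
/- Let Γ be a finite connected graph whose vertex set is partitioned into two classes: 'K-vertices' K₁,…,K_l and 'C-vertices' C₁,…,C_m, such that every edge joins a K-vertex to a C-vertex (Γ is bipartite). Suppose Γ has no multiple edges and satisfies the following separation property: whenever two C-vertices C and C' are both adjacent to the same K-vertex Kᵢ, any path in Γ from C to C' avoiding Kᵢ must pass through some other K-vertex Kⱼ adjacent to both C and C'. If additionally any two C-vertices adjacent to a common K-vertex Kᵢ and connected in Γ ∖ {Kᵢ} coincide, then Γ is a tree. -/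
/-!
A `K`-vertex `k` separates its neighbours: two of them joined in `Γ ∖ {k}` coincide. On a cycle
through `k`, the two neighbours of `k` on the cycle are distinct and are joined by the rest of the
cycle, which avoids `k`; so no cycle passes through a `K`-vertex. Since every edge has a
`K`-endpoint, every cycle passes through one, and `Γ` is acyclic.
-/

namespace SimpleGraph

variable {V : Type*} {G : SimpleGraph V}

def SeparatesNeighbors (G : SimpleGraph V) (k : V) : Prop :=
  ∀ c c' : {v : V // v ≠ k}, G.Adj k c.1 → G.Adj k c'.1 →
    (G.induce {v : V | v ≠ k}).Reachable c c' → c = c'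

theorem Walk.IsPath.end_notMem_support_dropLast {u v : V} {p : G.Walk u v} (hp : p.IsPath)
    (hnil : ¬p.Nil) : v ∉ p.dropLast.support := by
  have hnodup := hp.support_nodup
  rw [← Walk.support_dropLast_concat hnil, List.nodup_append] at hnodup
  exact fun hv ↦ hnodup.2.2 v hv v (List.mem_singleton_self v) rfl

theorem SeparatesNeighbors.not_isCycle {k : V} (hk : G.SeparatesNeighbors k) (p : G.Walk k k) :
    ¬p.IsCycle := by
  intro hp
  cases p with
  | nil => exact hp.not_nil Walk.nil_nil
  | @cons _ c _ h q =>
    have hq : ¬q.Nil := fun hq ↦ by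
      simpa [Walk.length_eq_zero_iff.mpr hq] using hp.three_le_length
    have hne : c ≠ q.penultimate := by
      simpa [Walk.snd_cons, Walk.penultimate_cons_of_not_nil _ _ hq] using hp.snd_ne_penultimate
    have havoid : ∀ x ∈ q.dropLast.support, x ∈ {v : V | v ≠ k} := fun x hx hxk ↦
      (((Walk.cons_isCycle_iff q h).mp hp).1.end_notMem_support_dropLast hq) (hxk ▸ hx)
    exact hne (congrArg Subtype.val
      (hk _ _ h (Walk.adj_penultimate hq).symm ⟨q.dropLast.induce _ havoid⟩))

theorem isAcyclic_of_forall_adj_separatesNeighbors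
    (h : ∀ u v, G.Adj u v → G.SeparatesNeighbors u ∨ G.SeparatesNeighbors v) :
    G.IsAcyclic := by
  classical
  intro v p hp
  rcases h v p.snd (p.adj_snd hp.not_nil) with hv | hsnd
  · exact hv.not_isCycle p hp
  · exact hsnd.not_isCycle _
      (hp.rotate (List.mem_of_mem_tail (p.snd_mem_tail_support hp.not_nil)))

end SimpleGraph

theorem dual_graph_is_tree_general
    {V : Type*} (Γ : SimpleGraph V) (hconn : Γ.Connected)
    (isK : V → Prop)
    (hbip : ∀ u v : V, Γ.Adj u v → (isK u ↔ ¬ isK v))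
    (hsep : ∀ (k : V), isK k → ∀ (c c' : {v : V // v ≠ k}),
      ¬ isK c.1 → ¬ isK c'.1 → Γ.Adj k c.1 → Γ.Adj k c'.1 →
      (Γ.induce {v : V | v ≠ k}).Reachable c c' → c = c') :
    Γ.IsTree := by
  have hK : ∀ k, isK k → Γ.SeparatesNeighbors k := fun k hk c c' hc hc' ↦
    hsep k hk c c' ((hbip k c hc).mp hk) ((hbip k c' hc').mp hk) hc hc'
  refine ⟨hconn, SimpleGraph.isAcyclic_of_forall_adj_separatesNeighbors fun u v huv ↦ ?_⟩
  by_cases hu : isK u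
  · exact .inl (hK u hu)
  · exact .inr (hK v (by simpa [hu] using (hbip u v huv).not))

/-- Lemma 3.4: the dual graph is a tree. Let `Γ` be a finite connected simple graph whose
vertices split into `K`-vertices and `C`-vertices (`isK`), every edge joining a
`K`-vertex to a `C`-vertex. If any two `C`-vertices adjacent to a common `K`-vertex `k`
which are connected in `Γ ∖ {k}` coincide, then `Γ` is a tree. -/
theorem dual_graph_is_tree
    {V : Type*} [Fintype V] (Γ : SimpleGraph V) (hconn : Γ.Connected)
    (isK : V → Prop)
    (hbip : ∀ u v : V, Γ.Adj u v → (isK u ↔ ¬ isK v))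
    (hsep : ∀ (k : V), isK k → ∀ (c c' : {v : V // v ≠ k}),
      ¬ isK c.1 → ¬ isK c'.1 → Γ.Adj k c.1 → Γ.Adj k c'.1 →
      (Γ.induce {v : V | v ≠ k}).Reachable c c' → c = c') :
    Γ.IsTree :=
  dual_graph_is_tree_general Γ hconn isK hbip hsep
end

section
/- Let T be a graph whose vertices are the 'indecomposable sets' V and whose edges are 'walls' W, where each wall W partitions the ambient connected space M ∖ (union of all walls) into a positive side W⁺ and a negative side W⁻, no wall separates two points of another wall, and each wall is adjacent to exactly two indecomposable sets (one in W⁺, one in W⁻). Then T contains no embedded cycles; together with connectedness of M implying connectedness of T, T is a tree. -/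
/-!
Every edge of `T` is a bridge. The pieces lying on the positive side of a wall `W i` form a set
of vertices that only the edge of `W i` leaves: if `u ⊆ W i⁺` and `v ⊆ W i⁻` are joined by the
edge of a wall `W j`, then `W j` lies in `closure u ∩ closure v`, which meets neither open side of
`W i` and so lies in `W i`. Since `M` is connected, `W j` is nonempty, so the closures of `u` and
`v` both meet `W i`, and `u`, `v` are the two pieces adjacent to `W i`.
-/

open Set

section Topology

variable {M : Type*} [TopologicalSpace M] {W P N s t : Set M}

theorem closure_inter_closure_subset_of_union_eq_univ (hcover : W ∪ P ∪ N = univ)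
    (hP : IsOpen P) (hN : IsOpen N) (hPN : Disjoint P N) (hs : s ⊆ P) (ht : t ⊆ N) :
    closure s ∩ closure t ⊆ W := by
  rintro x ⟨hxs, hxt⟩
  have hxN : x ∉ N := closure_minimal (hs.trans hPN.subset_compl_right) hN.isClosed_compl hxs
  have hxP : x ∉ P := closure_minimal (ht.trans hPN.subset_compl_left) hP.isClosed_compl hxt
  have hx : x ∈ W ∪ P ∪ N := hcover ▸ mem_univ x
  simpa [hxN, hxP] using hx

theorem nonempty_of_union_eq_univ [ConnectedSpace M] (hcover : W ∪ P ∪ N = univ)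
    (hP : IsOpen P) (hN : IsOpen N) (hPN : Disjoint P N) (hPne : P.Nonempty) (hNne : N.Nonempty) :
    W.Nonempty := by
  rw [nonempty_iff_ne_empty]
  rintro rfl
  obtain ⟨x, -, hxP, hxN⟩ := isPreconnected_univ P N hP hN (by simp [← hcover])
    (by simpa using hPne) (by simpa using hNne)
  exact hPN.ne_of_mem hxP hxN rfl

end Topology

namespace SimpleGraph

variable {V : Type*} {G : SimpleGraph V} {u v : V}

theorem isBridge_of_unique_edge_leaving (S : Set V) (hu : u ∈ S) (hv : v ∉ S)
    (h : ∀ a b, G.Adj a b → a ∈ S → b ∉ S → s(a, b) = s(u, v)) : G.IsBridge s(u, v) := by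
  rw [isBridge_iff_forall_walk_mem_edges]
  intro p
  obtain ⟨d, hd, hdS, hdS'⟩ := p.exists_boundary_dart S hu hv
  rw [← h _ _ d.adj hdS hdS', p.edges_eq_map_darts]
  exact List.mem_map_of_mem hd

end SimpleGraph

theorem eq_endP_and_eq_endM_of_closure_inter_nonempty {M V : Type*} [TopologicalSpace M]
    {W Wp Wm : Set M} {piece : V → Set M} {endP endM : V} {a b : V}
    (hcover : W ∪ Wp ∪ Wm = univ) (hWp : IsOpen Wp) (hWm : IsOpen Wm) (hdisj : Disjoint Wp Wm)
    (hexact : ∀ v, (W ∩ closure (piece v)).Nonempty → v = endP ∨ v = endM)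
    (hP : ¬ piece endP ⊆ Wm) (hM : ¬ piece endM ⊆ Wp)
    (ha : piece a ⊆ Wp) (hb : piece b ⊆ Wm)
    (hab : (closure (piece a) ∩ closure (piece b)).Nonempty) :
    a = endP ∧ b = endM := by
  obtain ⟨x, hxa, hxb⟩ := hab
  have hxW : x ∈ W :=
    closure_inter_closure_subset_of_union_eq_univ hcover hWp hWm hdisj ha hb ⟨hxa, hxb⟩
  refine ⟨(hexact a ⟨x, hxW, hxa⟩).resolve_right ?_, (hexact b ⟨x, hxW, hxb⟩).resolve_left ?_⟩
  · rintro rfl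
    exact hM ha
  · rintro rfl
    exact hP hb

theorem wall_graph_is_tree_general
    {M : Type*} [TopologicalSpace M] [ConnectedSpace M]
    {ι : Type*} {V : Type*}
    (W Wp Wm : ι → Set M) (piece : V → Set M) (endP endM : ι → V)
    -- each wall splits the space into the wall and its two open sides
    (hcover : ∀ i, W i ∪ Wp i ∪ Wm i = univ)
    (hWpopen : ∀ i, IsOpen (Wp i)) (hWmopen : ∀ i, IsOpen (Wm i))
    (hdisj₁ : ∀ i, Disjoint (Wp i) (Wm i))
    -- the pieces are nonempty, avoid all walls, and are not separated by any wall
    (hne : ∀ v, (piece v).Nonempty)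
    (hunsep : ∀ v i, piece v ⊆ Wp i ∨ piece v ⊆ Wm i)
    -- each wall is adjacent to exactly two pieces, one on each side
    (hendP : ∀ i, piece (endP i) ⊆ Wp i ∧ W i ⊆ closure (piece (endP i)))
    (hendM : ∀ i, piece (endM i) ⊆ Wm i ∧ W i ⊆ closure (piece (endM i)))
    (hexact : ∀ i v, (W i ∩ closure (piece v)).Nonempty → v = endP i ∨ v = endM i) :
    (SimpleGraph.fromRel (fun u v : V => ∃ i, endP i = u ∧ endM i = v)).IsAcyclic ∧
    ((SimpleGraph.fromRel (fun u v : V => ∃ i, endP i = u ∧ endM i = v)).Connected →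
      (SimpleGraph.fromRel (fun u v : V => ∃ i, endP i = u ∧ endM i = v)).IsTree) := by
  set G := SimpleGraph.fromRel (fun u v : V => ∃ i, endP i = u ∧ endM i = v)
  have hsided : ∀ i v, piece v ⊆ Wp i → ¬ piece v ⊆ Wm i := fun i v hp hm =>
    (hne v).ne_empty (disjoint_self.1 ((hdisj₁ i).mono hp hm))
  have hwall : ∀ j, (closure (piece (endP j)) ∩ closure (piece (endM j))).Nonempty := fun j =>
    (nonempty_of_union_eq_univ (hcover j) (hWpopen j) (hWmopen j) (hdisj₁ j)
      ((hne _).mono (hendP j).1) ((hne _).mono (hendM j).1)).mono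
      (subset_inter (hendP j).2 (hendM j).2)
  have hmeet : ∀ a b, G.Adj a b → (closure (piece a) ∩ closure (piece b)).Nonempty := by
    rintro a b ⟨-, ⟨j, rfl, rfl⟩ | ⟨j, rfl, rfl⟩⟩
    exacts [hwall j, inter_comm _ _ ▸ hwall j]
  have hbridge : ∀ i, G.IsBridge s(endP i, endM i) := fun i =>
    SimpleGraph.isBridge_of_unique_edge_leaving {v | piece v ⊆ Wp i} (hendP i).1
      (fun h => hsided i _ h (hendM i).1) fun a b hab ha hb => by
        obtain ⟨rfl, rfl⟩ := eq_endP_and_eq_endM_of_closure_inter_nonempty (hcover i)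
          (hWpopen i) (hWmopen i) (hdisj₁ i) (hexact i) (hsided i _ (hendP i).1)
          (fun h => hsided i _ h (hendM i).1) ha ((hunsep b i).resolve_left hb) (hmeet a b hab)
        rfl
  have hacyc : G.IsAcyclic := SimpleGraph.isAcyclic_iff_forall_adj_isBridge.2 <| by
    rintro u v ⟨-, ⟨i, rfl, rfl⟩ | ⟨i, rfl, rfl⟩⟩
    exacts [hbridge i, Sym2.eq_swap ▸ hbridge i]
  exact ⟨hacyc, fun hconn => ⟨hconn, hacyc⟩⟩

/-- Lemma 8.3: the graph `T` whose vertices are the indecomposable sets (`piece v`) and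
whose edges are the walls (`W i`, with sides `Wp i`, `Wm i` and adjacent indecomposable
sets `endP i`, `endM i`) contains no embedded cycles; together with connectedness, `T`
is a tree. -/
theorem wall_graph_is_tree
    {M : Type*} [TopologicalSpace M] [ConnectedSpace M]
    {ι : Type*} {V : Type*}
    (W Wp Wm : ι → Set M) (piece : V → Set M) (endP endM : ι → V)
    -- each wall splits the space into the wall and its two open sides
    (hcover : ∀ i, W i ∪ Wp i ∪ Wm i = univ)
    (hWclosed : ∀ i, IsClosed (W i)) (hWpopen : ∀ i, IsOpen (Wp i)) (hWmopen : ∀ i, IsOpen (Wm i))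
    (hdisj₁ : ∀ i, Disjoint (Wp i) (Wm i)) (hdisj₂ : ∀ i, Disjoint (W i) (Wp i ∪ Wm i))
    -- no wall separates two points of another wall
    (hnosep : ∀ i j, i ≠ j → W j ⊆ Wp i ∪ W i ∨ W j ⊆ Wm i ∪ W i)
    -- the pieces are nonempty, avoid all walls, and are not separated by any wall
    (hne : ∀ v, (piece v).Nonempty)
    (hoff : ∀ v i, Disjoint (piece v) (W i))
    (hunsep : ∀ v i, piece v ⊆ Wp i ∨ piece v ⊆ Wm i)
    -- every point lies on a wall or in a piece
    (hall : ∀ x : M, (∃ i, x ∈ W i) ∨ (∃ v, x ∈ piece v))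
    -- closures of pieces are path connected
    (hpath : ∀ v, ∀ x ∈ closure (piece v), ∀ y ∈ closure (piece v),
      JoinedIn (closure (piece v)) x y)
    -- each wall is adjacent to exactly two pieces, one on each side
    (hendP : ∀ i, piece (endP i) ⊆ Wp i ∧ W i ⊆ closure (piece (endP i)))
    (hendM : ∀ i, piece (endM i) ⊆ Wm i ∧ W i ⊆ closure (piece (endM i)))
    (hexact : ∀ i v, (W i ∩ closure (piece v)).Nonempty → v = endP i ∨ v = endM i) :
    (SimpleGraph.fromRel (fun u v : V => ∃ i, endP i = u ∧ endM i = v)).IsAcyclic ∧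
    ((SimpleGraph.fromRel (fun u v : V => ∃ i, endP i = u ∧ endM i = v)).Connected →
      (SimpleGraph.fromRel (fun u v : V => ∃ i, endP i = u ∧ endM i = v)).IsTree) :=
  wall_graph_is_tree_general W Wp Wm piece endP endM hcover hWpopen hWmopen hdisj₁ hne hunsep hendP
    hendM hexact
end

section
/- Let G act cocompactly by isometries on a metric space M (i.e., there exists r ≥ 0 with M = B_r(G·x₀) for some x₀), and let V ⊆ M be a G-invariant subset contained in a set W⁺ whose complement contains an unbounded set W⁻ with W⁻ ∖ B_s(V) ≠ ∅ for every s (W⁻ is not contained in any bounded neighborhood of V). Then V cannot satisfy M = B_r(V) for any r; consequently, a G-invariant indecomposable set cannot exist, i.e., the action of G on the tree T has no global fixed vertex. -/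
open Set Pointwise

section IsometricAction

variable {G M : Type*} [SMul G M] [PseudoMetricSpace M] [IsIsometricSMul G M]

theorem exists_dist_smul_le_add_dist {x₀ : M} {r : ℝ}
    (hcocompact : ∀ y : M, ∃ g : G, dist y (g • x₀) ≤ r) (v y : M) :
    ∃ g : G, dist y (g • v) ≤ r + dist x₀ v := by
  obtain ⟨g, hg⟩ := hcocompact y
  refine ⟨g, ?_⟩
  calc dist y (g • v) ≤ dist y (g • x₀) + dist (g • x₀) (g • v) := dist_triangle _ _ _
    _ ≤ r + dist x₀ v := by rw [dist_smul]; gcongr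

theorem exists_mem_dist_le_of_smul_eq_self {x₀ : M} {r : ℝ}
    (hcocompact : ∀ y : M, ∃ g : G, dist y (g • x₀) ≤ r)
    {V : Set M} (hVinv : ∀ g : G, g • V = V) {v : M} (hv : v ∈ V) (y : M) :
    ∃ x ∈ V, dist y x ≤ r + dist x₀ v := by
  obtain ⟨g, hg⟩ := exists_dist_smul_le_add_dist hcocompact v y
  exact ⟨g • v, hVinv g ▸ smul_mem_smul_set hv, hg⟩

end IsometricAction

theorem no_invariant_indecomposable_set_general
    {G M : Type*} [Group G] [MetricSpace M] [MulAction G M]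
    (hisom : ∀ (g : G) (x y : M), dist (g • x) (g • y) = dist x y)
    (x₀ : M) (r : ℝ) (hcocompact : ∀ y : M, ∃ g : G, dist y (g • x₀) ≤ r)
    (V Wm : Set M)
    (hVinv : ∀ g : G, g • V = V) (hVne : V.Nonempty)
    (hesc : ∀ s : ℝ, ∃ y ∈ Wm, ∀ x ∈ V, s < dist y x) :
    False := by
  have : IsIsometricSMul G M := ⟨fun g => Isometry.of_dist_eq (hisom g)⟩
  obtain ⟨v, hv⟩ := hVne
  obtain ⟨y, -, hy⟩ := hesc (r + dist x₀ v)
  obtain ⟨x, hxV, hx⟩ := exists_mem_dist_le_of_smul_eq_self hcocompact hVinv hv y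
  exact (hy x hxV).not_ge hx

/-- The "no global fixed vertex" step: if `G` acts cocompactly by isometries on a metric
space `M`, and `V` is a nonempty `G`-invariant set contained in a half-space `W⁺` whose
opposite side `W⁻` escapes every bounded neighborhood of `V`, then we reach a
contradiction; in particular `M = B_r(V)` fails for every `r`, and no `G`-invariant
indecomposable set (fixed vertex of the tree `T`) can exist. -/
theorem no_invariant_indecomposable_set
    {G M : Type*} [Group G] [MetricSpace M] [MulAction G M]
    (hisom : ∀ (g : G) (x y : M), dist (g • x) (g • y) = dist x y)
    (x₀ : M) (r : ℝ) (hcocompact : ∀ y : M, ∃ g : G, dist y (g • x₀) ≤ r)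
    (V Wp Wm : Set M)
    (hVinv : ∀ g : G, g • V = V) (hVne : V.Nonempty)
    (hVsub : V ⊆ Wp) (hdisj : Disjoint Wp Wm)
    (hesc : ∀ s : ℝ, ∃ y ∈ Wm, ∀ x ∈ V, s < dist y x) :
    False :=
  no_invariant_indecomposable_set_general hisom x₀ r hcocompact V Wm hVinv hVne hesc
end
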